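/- arXiv:1612.05963 — 2 statements merged into one kernel-verified Lean document; each statement's English description precedes it below -/
import Mathlib

section
/- Let M be a compact metric space and F = {f_λ : λ ∈ Λ} a finite family of continuous maps on M (an IFS). Suppose F has the finite shadowing property: for every ε > 0 there exists δ > 0 such that every finite δ-chain {x_0,…,x_m} (i.e., d(x_{k+1}, f_{λ_k}(x_k)) ≤ δ for some choice λ_k ∈ Λ) is ε-shadowed by a finite true chain {y_0,…,y_m} (i.e., y_{k+1} = f_{μ_k}(y_k) for some μ_k ∈ Λ and d(x_k, y_k) < ε). Then F has the (infinite) shadowing property: for every ε > 0 there exists δ > 0 such that every bi-infinite δ-chain {x_k}_{k∈ℤ} is ε-shadowed by a bi-infinite true chain {y_k}_{k∈ℤ}. -/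
/-!
Given a bi-infinite δ-chain `x`, finite shadowing yields for every `n` a true chain `Yₙ`
shadowing `x` on the window `[-n, n]`. In the compact space `ℤ → M` the sequence `Yₙ` has a
cluster point `y`. For each fixed `k`, the conditions "`y (k + 1) = F l (y k)` for some `l`" and
"`dist (x k) (y k) ≤ ε`" cut out closed sets (the first is a finite union, as `Λ` is finite)
which contain `Yₙ` for all large `n`, so `y` satisfies them all.
-/

open Filter

theorem exists_forall_mem_of_eventually_mem {X ι α : Type*} [TopologicalSpace X] [CompactSpace X]
    {l : Filter α} [l.NeBot] {u : α → X} {C : ι → Set X} (hC : ∀ i, IsClosed (C i))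
    (hu : ∀ i, ∀ᶠ a in l, u a ∈ C i) : ∃ x, ∀ i, x ∈ C i := by
  obtain ⟨x, hx⟩ := exists_clusterPt_of_compactSpace (map u l)
  exact ⟨x, fun i => (hC i).mem_of_mapClusterPt hx (hu i)⟩

theorem isClosed_setOf_exists_apply_eq {M Λ ι : Type*} [TopologicalSpace M] [T2Space M]
    [Finite Λ] {F : Λ → M → M} (hF : ∀ l, Continuous (F l)) (i j : ι) :
    IsClosed {y : ι → M | ∃ l, y j = F l (y i)} := by
  rw [Set.ofPred_exists]
  exact isClosed_iUnion_of_finite fun l =>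
    isClosed_eq (continuous_apply j) ((hF l).comp (continuous_apply i))

def FinitelyShadows {M Λ : Type*} [PseudoMetricSpace M] (F : Λ → M → M) (δ ε : ℝ) : Prop :=
  ∀ (m : ℕ) (x : ℕ → M) (lam : ℕ → Λ),
    (∀ k < m, dist (x (k + 1)) (F (lam k) (x k)) ≤ δ) →
    ∃ (y : ℕ → M) (mu : ℕ → Λ),
      (∀ k < m, y (k + 1) = F (mu k) (y k)) ∧ ∀ k ≤ m, dist (x k) (y k) < ε

theorem FinitelyShadows.exists_chain_near_on_window {M Λ : Type*} [PseudoMetricSpace M]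
    {F : Λ → M → M} {δ ε : ℝ} (hshad : FinitelyShadows F δ ε) {x : ℤ → M} {lam : ℤ → Λ}
    (hx : ∀ k, dist (x (k + 1)) (F (lam k) (x k)) ≤ δ) (n : ℕ) :
    ∃ y : ℤ → M, (∀ k, -(n : ℤ) ≤ k → k < n → ∃ l, y (k + 1) = F l (y k)) ∧
      ∀ k, -(n : ℤ) ≤ k → k ≤ n → dist (x k) (y k) < ε := by
  have hshift : ∀ j < 2 * n, dist (x ((j + 1 : ℕ) - n)) (F (lam (j - n)) (x (j - n))) ≤ δ := by
    intro j _
    convert hx (j - n) using 3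
    push_cast
    ring
  obtain ⟨y, mu, hchain, hnear⟩ := hshad (2 * n) (fun j => x (j - n)) (fun j => lam (j - n)) hshift
  refine ⟨fun k => y (k + n).toNat, fun k hk₁ hk₂ => ⟨mu (k + n).toNat, ?_⟩, fun k hk₁ hk₂ => ?_⟩
  · change y (k + 1 + n).toNat = _
    rw [show (k + 1 + n).toNat = (k + n).toNat + 1 by omega]
    exact hchain _ (by omega)
  · have h := hnear (k + n).toNat (by omega)
    rwa [show ((k + n).toNat : ℤ) - n = k by omega] at h

theorem finite_shadowing_implies_shadowing_general
    {M : Type*} [MetricSpace M] [CompactSpace M]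
    {Λ : Type*} [Finite Λ]
    (F : Λ → M → M) (hF : ∀ l : Λ, Continuous (F l))
    (hfin : ∀ ε > (0 : ℝ), ∃ δ > (0 : ℝ), ∀ (m : ℕ) (x : ℕ → M) (lam : ℕ → Λ),
      (∀ k < m, dist (x (k + 1)) (F (lam k) (x k)) ≤ δ) →
      ∃ (y : ℕ → M) (mu : ℕ → Λ),
        (∀ k < m, y (k + 1) = F (mu k) (y k)) ∧ ∀ k ≤ m, dist (x k) (y k) < ε) :
    ∀ ε > (0 : ℝ), ∃ δ > (0 : ℝ), ∀ (x : ℤ → M) (lam : ℤ → Λ),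
      (∀ k : ℤ, dist (x (k + 1)) (F (lam k) (x k)) ≤ δ) →
      ∃ (y : ℤ → M) (mu : ℤ → Λ),
        (∀ k : ℤ, y (k + 1) = F (mu k) (y k)) ∧ ∀ k : ℤ, dist (x k) (y k) ≤ ε := by
  intro ε hε
  obtain ⟨δ, hδ, hshad⟩ := hfin ε hε
  refine ⟨δ, hδ, fun x lam hx => ?_⟩
  choose Y hYchain hYnear using
    FinitelyShadows.exists_chain_near_on_window (F := F) hshad hx
  let C (k : ℤ) : Set (ℤ → M) :=
    {y | ∃ l, y (k + 1) = F l (y k)} ∩ {y | dist (x k) (y k) ≤ ε}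
  have hC : ∀ k, IsClosed (C k) := fun k =>
    (isClosed_setOf_exists_apply_eq hF k (k + 1)).inter
      (isClosed_le (continuous_const.dist (continuous_apply k)) continuous_const)
  have hYC : ∀ k, ∀ᶠ n in atTop, Y n ∈ C k := fun k =>
    eventually_atTop.2 ⟨k.natAbs + 1, fun n hn =>
      ⟨hYchain n k (by omega) (by omega), (hYnear n k (by omega) (by omega)).le⟩⟩
  obtain ⟨y, hy⟩ := exists_forall_mem_of_eventually_mem hC hYC
  choose mu hmu using fun k => (hy k).1
  exact ⟨y, mu, hmu, fun k => (hy k).2⟩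

/-- Finite shadowing implies (bi-infinite) shadowing for an IFS of
continuous maps on a compact metric space. -/
theorem finite_shadowing_implies_shadowing
    {M : Type*} [MetricSpace M] [CompactSpace M]
    {Λ : Type*} [Finite Λ] [Nonempty Λ]
    (F : Λ → M → M) (hF : ∀ l : Λ, Continuous (F l))
    (hfin : ∀ ε > (0 : ℝ), ∃ δ > (0 : ℝ), ∀ (m : ℕ) (x : ℕ → M) (lam : ℕ → Λ),
      (∀ k < m, dist (x (k + 1)) (F (lam k) (x k)) ≤ δ) →
      ∃ (y : ℕ → M) (mu : ℕ → Λ),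
        (∀ k < m, y (k + 1) = F (mu k) (y k)) ∧ ∀ k ≤ m, dist (x k) (y k) < ε) :
    ∀ ε > (0 : ℝ), ∃ δ > (0 : ℝ), ∀ (x : ℤ → M) (lam : ℤ → Λ),
      (∀ k : ℤ, dist (x (k + 1)) (F (lam k) (x k)) ≤ δ) →
      ∃ (y : ℤ → M) (mu : ℤ → Λ),
        (∀ k : ℤ, y (k + 1) = F (mu k) (y k)) ∧ ∀ k : ℤ, dist (x k) (y k) ≤ ε :=
  finite_shadowing_implies_shadowing_general F hF hfin
end

section
/- Let M be a compact metric space, F an IFS of homeomorphisms with shadowing property, expansive relative to σ with constant η, and let h be the map defined by unique shadowing as in the semi-conjugacy theorem (with 3ε < η). Then h is uniformly continuous: for every μ > 0 there exists γ > 0 such that r(x, y) < γ implies r(h(x), h(y)) < μ. -/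
open Metric

namespace IFS

variable {M : Type*} [TopologicalSpace M] {Λ : Type*}

/-- Forward composition along `σ`: the time-`n` (n ≥ 0) map of the IFS. -/
def fwdComp (F : Λ → M ≃ₜ M) (σ : ℤ → Λ) : ℕ → M ≃ₜ M
  | 0 => Homeomorph.refl M
  | n + 1 => (fwdComp F σ n).trans (F (σ n))

/-- Backward composition along `σ`: the time-`(-n)` map of the IFS. -/
def bwdComp (F : Λ → M ≃ₜ M) (σ : ℤ → Λ) : ℕ → M ≃ₜ M
  | 0 => Homeomorph.refl M
  | n + 1 => (bwdComp F σ n).trans (F (σ (-(n + 1 : ℤ)))).symm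

/-- The composition `F_{σ_k}` along the symbol sequence `σ`, for `k ∈ ℤ`. -/
def ifsComp (F : Λ → M ≃ₜ M) (σ : ℤ → Λ) : ℤ → M ≃ₜ M
  | Int.ofNat n => fwdComp F σ n
  | Int.negSucc n => bwdComp F σ (n + 1)

/-- The C⁰ distance `ρ₀` between two homeomorphisms. -/
noncomputable def rho0 {M : Type*} [MetricSpace M] (f g : M ≃ₜ M) : ℝ :=
  ⨆ x : M, max (dist (f x) (g x)) (dist (f.symm x) (g.symm x))

/-- The distance `D₀` between two IFSs indexed by the same set. -/
noncomputable def D0 {M : Type*} [MetricSpace M] {Λ : Type*} (F G : Λ → M ≃ₜ M) : ℝ :=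
  ⨆ l : Λ, rho0 (F l) (G l)

end IFS

/-!
The tracking condition pins `h x` down as the only point whose `F`-orbit stays `ε`-close to the
`G`-orbit of `x`: two such points have `F`-orbits `2ε`-close, hence coincide by expansivity. So the
graph of `h` is cut out by closed conditions; a map into a compact space with closed graph is
continuous, and a continuous map on a compact space is uniformly continuous.
-/

open IFS

theorem continuous_of_isClosed_graph_of_compactSpace {X Y : Type*} [TopologicalSpace X]
    [TopologicalSpace Y] [CompactSpace Y] {h : X → Y}
    (hh : IsClosed {p : X × Y | p.2 = h p.1}) : Continuous h := by
  refine continuous_iff_isClosed.2 fun K hK => ?_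
  have hpre : h ⁻¹' K = Prod.fst '' ({p : X × Y | p.2 = h p.1} ∩ Prod.snd ⁻¹' K) :=
    Set.ext fun x => ⟨fun hx => ⟨(x, h x), ⟨rfl, hx⟩, rfl⟩,
      by rintro ⟨⟨x, y⟩, ⟨hy : y = h x, hyK⟩, rfl⟩; exact hy ▸ hyK⟩
  rw [hpre]
  exact isClosedMap_fst_of_compactSpace _ (hh.inter (hK.preimage continuous_snd))

section Tracking

variable {ι X M N : Type*} [PseudoMetricSpace N]
  {f : ι → M → N} {g : ι → X → N} {h : X → M} {ε η : ℝ}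

theorem graph_eq_setOf_forall_dist_le
    (hexp : ∀ a b : M, (∀ k, dist (f k a) (f k b) ≤ η) → a = b)
    (htrack : ∀ x k, dist (g k x) (f k (h x)) ≤ ε) (hεη : 2 * ε ≤ η) :
    {p : X × M | p.2 = h p.1} = {p | ∀ k, dist (g k p.1) (f k p.2) ≤ ε} := by
  ext ⟨x, m⟩
  refine ⟨fun hm k => hm ▸ htrack x k, fun hm => hexp _ _ fun k => ?_⟩
  calc dist (f k m) (f k (h x)) ≤ dist (g k x) (f k m) + dist (g k x) (f k (h x)) :=
        dist_triangle_left _ _ _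
    _ ≤ η := by linarith [hm k, htrack x k]

theorem continuous_of_forall_dist_le_of_expansive [TopologicalSpace X] [TopologicalSpace M]
    [CompactSpace M] (hf : ∀ k, Continuous (f k)) (hg : ∀ k, Continuous (g k))
    (hexp : ∀ a b : M, (∀ k, dist (f k a) (f k b) ≤ η) → a = b)
    (htrack : ∀ x k, dist (g k x) (f k (h x)) ≤ ε) (hεη : 2 * ε ≤ η) : Continuous h := by
  refine continuous_of_isClosed_graph_of_compactSpace ?_
  rw [graph_eq_setOf_forall_dist_le hexp htrack hεη, Set.ofPred_forall]
  exact isClosed_iInter fun k =>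
    isClosed_le (((hg k).comp continuous_fst).dist ((hf k).comp continuous_snd)) continuous_const

end Tracking

theorem tracking_map_uniformly_continuous_general
    {M : Type*} [MetricSpace M] [CompactSpace M]
    {Λ : Type*}
    (F G : Λ → M ≃ₜ M) (σ : ℤ → Λ) (η ε : ℝ) (hε : 0 < ε)
    (hεη : 3 * ε < η)
    (hexp : ∀ a b : M,
      (∀ 𝓃 : ℤ, dist (ifsComp F σ 𝓃 a) (ifsComp F σ 𝓃 b) ≤ η) → a = b)
    (h : M → M)
    (htrack : ∀ (x : M) (k : ℤ), dist (ifsComp G σ k x) (ifsComp F σ k (h x)) < ε) :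
    ∀ μ > (0 : ℝ), ∃ γ > (0 : ℝ), ∀ x y : M, dist x y < γ → dist (h x) (h y) < μ := by
  have hcont : Continuous h :=
    continuous_of_forall_dist_le_of_expansive (ε := ε) (fun k => (ifsComp F σ k).continuous)
      (fun k => (ifsComp G σ k).continuous) hexp (fun x k => (htrack x k).le) (by linarith)
  intro μ hμ
  obtain ⟨γ, hγ, hγμ⟩ :=
    Metric.uniformContinuous_iff.1 (CompactSpace.uniformContinuous_of_continuous hcont) μ hμ
  exact ⟨γ, hγ, fun x y => @hγμ x y⟩

/-- The shadowing-induced tracking map `h` is uniformly continuous: if `F` is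
expansive relative to `σ` with constant `η`, `3ε < η`, and `h` satisfies the tracking estimates
of the semi-conjugacy theorem with respect to an IFS `G`, then for every `μ > 0` there is
`γ > 0` such that `dist x y < γ` implies `dist (h x) (h y) < μ`. -/
theorem tracking_map_uniformly_continuous
    {M : Type*} [MetricSpace M] [CompactSpace M]
    {Λ : Type*} [Finite Λ] [Nonempty Λ]
    (F G : Λ → M ≃ₜ M) (σ : ℤ → Λ) (η ε δ : ℝ) (hη : 0 < η) (hε : 0 < ε)
    (hεη : 3 * ε < η) (hδ : 0 < δ)
    (hexp : ∀ a b : M,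
      (∀ 𝓃 : ℤ, dist (ifsComp F σ 𝓃 a) (ifsComp F σ 𝓃 b) ≤ η) → a = b)
    (hD : D0 F G < δ)
    (h : M → M)
    (htrack : ∀ (x : M) (k : ℤ), dist (ifsComp G σ k x) (ifsComp F σ k (h x)) < ε)
    (hclose : ∀ x : M, dist x (h x) < ε) :
    ∀ μ > (0 : ℝ), ∃ γ > (0 : ℝ), ∀ x y : M, dist x y < γ → dist (h x) (h y) < μ :=
  tracking_map_uniformly_continuous_general F G σ η ε hε hεη hexp h htrack
end
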